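/- arXiv:2307.09116 — 3 statements merged into one kernel-verified Lean document; each statement's English description precedes it below -/
import Mathlib

section
/- There exist a mutually unbiased qubit measurement pair {Π_{a|x}} (for Alice's side), qubit states σ_0, σ_1, and conditional distributions B_0, B_1 for Bob such that for all a,b,x,y ∈ {0,1}: P(a,b|x,y) = (1/2) · Tr(Π_{a|x} σ_0) · B_0(b|y) + (1/2) · Tr(Π_{a|x} σ_1) · B_1(b|y). That is, the box P admits an LHS-LHV decomposition from Bob to Alice with hidden variable of dimension 2, so P is not superunsteerable from Bob to Alice. -/
open Matrix Kronecker ComplexOrder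

noncomputable section

/-- The box `P(a,b|x,y)`:
`P(·|0,0) = (1/2, 1/4, 0, 1/4)`, `P(·|0,1) = (3/8, 3/8, 1/8, 1/8)`,
`P(·|1,0) = (1/4, 1/2, 1/4, 0)`, `P(·|1,1) = (3/8, 3/8, 1/8, 1/8)`. -/
def Pbox (a b x y : Fin 2) : ℝ :=
  if y = 1 then (if a = 0 then 3/8 else 1/8)
  else if x = 0 then
    (if a = 0 then (if b = 0 then 1/2 else 1/4) else (if b = 0 then 0 else 1/4))
  else
    (if a = 0 then (if b = 0 then 1/4 else 1/2) else (if b = 0 then 1/4 else 0))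

/-- Deterministic one-party box `P_D^{αβ}(a|x) = 1` iff `a = α·x ⊕ β`. -/
def PD (α β : Fin 2) (a x : Fin 2) : ℝ := if a = α * x + β then 1 else 0

/-- A conditional distribution (one-party box): `Q b y ≥ 0` and `Q 0 y + Q 1 y = 1`. -/
def IsCondDistrib (Q : Fin 2 → Fin 2 → ℝ) : Prop :=
  (∀ b y, 0 ≤ Q b y) ∧ ∀ y, Q 0 y + Q 1 y = 1

/-- A qubit state: a 2×2 complex positive semidefinite matrix of trace 1. -/
def IsQubitState (ρ : Matrix (Fin 2) (Fin 2) ℂ) : Prop :=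
  ρ.PosSemidef ∧ ρ.trace = 1

/-- A rank-one orthogonal projection on ℂ²: Hermitian, idempotent, trace 1. -/
def IsRankOneProj (M : Matrix (Fin 2) (Fin 2) ℂ) : Prop :=
  M.IsHermitian ∧ M * M = M ∧ M.trace = 1

/-- A mutually unbiased qubit measurement pair `{Π_{b|y}}`: for each input `y`,
`Π_{0|y}, Π_{1|y}` are rank-one orthogonal projections summing to the identity,
and `Tr(Π_{0|0} Π_{0|1}) = 1/2`. -/
def IsMUBPair (Meas : Fin 2 → Fin 2 → Matrix (Fin 2) (Fin 2) ℂ) : Prop :=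
  (∀ b y, IsRankOneProj (Meas b y)) ∧ (∀ y, Meas 0 y + Meas 1 y = 1) ∧
    (Meas 0 0 * Meas 0 1).trace = 1/2


/-! The hidden variable `k ∈ {0, 1}` is uniform; given `k`, Bob's state is `σ_k = Π_{0|k}` and
Bob answers `k` on input `0` and a fair coin on input `1`. For any mutually unbiased pair the
overlaps `Tr(Π_{a|x} Π_{0|k})` are forced: `δ_{a0}` when `x = k` (orthogonal projections summing
to `1`) and `1/2` when `x ≠ k`. With these numbers the mixture reproduces `P` entry by entry.
A mutually unbiased pair exists: the eigenprojections `(1 ± S)/2` of the anticommuting Pauli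
matrices `Z` and `X`, and its projections are themselves qubit states. -/

theorem IsRankOneProj.isQubitState {M : Matrix (Fin 2) (Fin 2) ℂ} (h : IsRankOneProj M) :
    IsQubitState M := by
  obtain ⟨hHerm, hIdem, hTrace⟩ := h
  have hM : Mᴴ * M = M := by rw [hHerm.eq, hIdem]
  exact ⟨hM ▸ posSemidef_conjTranspose_mul_self M, hTrace⟩

theorem isRankOneProj_half_smul_one_add {S : Matrix (Fin 2) (Fin 2) ℂ} (hS : S.IsHermitian)
    (hSS : S * S = 1) (hTr : S.trace = 0) : IsRankOneProj ((1 / 2 : ℂ) • (1 + S)) := by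
  refine ⟨(isHermitian_one.add hS).smul (by norm_num [IsSelfAdjoint]), ?_, ?_⟩
  · simp only [smul_mul_smul_comm, add_mul, mul_add, one_mul, mul_one, hSS]
    module
  · simp [trace_add, hTr]

def eigenProj (S : Matrix (Fin 2) (Fin 2) ℂ) (a : Fin 2) : Matrix (Fin 2) (Fin 2) ℂ :=
  (1 / 2 : ℂ) • (1 + (-1 : ℂ) ^ (a : ℕ) • S)

theorem isRankOneProj_eigenProj {S : Matrix (Fin 2) (Fin 2) ℂ} (hS : S.IsHermitian)
    (hSS : S * S = 1) (hTr : S.trace = 0) (a : Fin 2) : IsRankOneProj (eigenProj S a) := by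
  fin_cases a
  · simpa [eigenProj] using isRankOneProj_half_smul_one_add hS hSS hTr
  · simpa [eigenProj, ← sub_eq_add_neg] using
      isRankOneProj_half_smul_one_add hS.neg (by rw [neg_mul_neg, hSS])
        (by rw [trace_neg, hTr, neg_zero])

theorem eigenProj_zero_add_eigenProj_one (S : Matrix (Fin 2) (Fin 2) ℂ) :
    eigenProj S 0 + eigenProj S 1 = 1 := by
  simp only [eigenProj, Fin.val_zero, Fin.val_one, pow_zero, pow_one, one_smul, neg_one_smul]
  module

theorem trace_eigenProj_mul_eigenProj {S T : Matrix (Fin 2) (Fin 2) ℂ} (hS : S.trace = 0)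
    (hT : T.trace = 0) (hST : S * T = -(T * S)) :
    (eigenProj S 0 * eigenProj T 0).trace = 1 / 2 := by
  have hSTtr : (S * T).trace = 0 := by
    have := congrArg trace hST
    rw [trace_neg, trace_mul_comm T] at this
    linear_combination this / 2
  simp [eigenProj, add_mul, mul_add, trace_add, hS, hT, hSTtr]

theorem isMUBPair_eigenProj {S T : Matrix (Fin 2) (Fin 2) ℂ} (hS : S.IsHermitian)
    (hT : T.IsHermitian) (hSS : S * S = 1) (hTT : T * T = 1) (hSTr : S.trace = 0)
    (hTTr : T.trace = 0)
    (hST : S * T = -(T * S)) : IsMUBPair fun a x ↦ eigenProj (![S, T] x) a := by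
  refine ⟨fun a x ↦ ?_, fun x ↦ eigenProj_zero_add_eigenProj_one _,
    trace_eigenProj_mul_eigenProj hSTr hTTr hST⟩
  fin_cases x
  exacts [isRankOneProj_eigenProj hS hSS hSTr a, isRankOneProj_eigenProj hT hTT hTTr a]

def pauliX : Matrix (Fin 2) (Fin 2) ℂ := !![0, 1; 1, 0]

def pauliZ : Matrix (Fin 2) (Fin 2) ℂ := !![1, 0; 0, -1]

theorem exists_isMUBPair : ∃ Meas, IsMUBPair Meas := by
  refine ⟨_, isMUBPair_eigenProj (S := pauliZ) (T := pauliX) ?_ ?_ ?_ ?_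
    (by simp [pauliZ]) (by simp [pauliX]) ?_⟩
  all_goals ext i j; fin_cases i <;> fin_cases j <;> simp [pauliZ, pauliX]

def mubOverlap (a x k : Fin 2) : ℝ := if x = k then (if a = 0 then 1 else 0) else 1 / 2

theorem IsMUBPair.trace_mul_proj_zero {Meas : Fin 2 → Fin 2 → Matrix (Fin 2) (Fin 2) ℂ}
    (h : IsMUBPair Meas) (a x k : Fin 2) : (Meas a x * Meas 0 k).trace = mubOverlap a x k := by
  obtain ⟨hProj, hSum, hMUB⟩ := h
  have hCompl (y : Fin 2) : Meas 1 y = 1 - Meas 0 y := eq_sub_of_add_eq' (hSum y)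
  have hMUB' : (Meas 0 1 * Meas 0 0).trace = 1 / 2 := by rw [trace_mul_comm, hMUB]
  fin_cases a <;> fin_cases x <;> fin_cases k <;>
    simp [mubOverlap, hCompl, sub_mul, (hProj _ _).2.1, (hProj _ _).2.2, hMUB, hMUB'] <;> norm_num

def bobResponse (k b y : Fin 2) : ℝ := if y = 0 then (if b = k then 1 else 0) else 1 / 2

theorem isCondDistrib_bobResponse (k : Fin 2) : IsCondDistrib (bobResponse k) :=
  ⟨fun b y ↦ by unfold bobResponse; split_ifs <;> norm_num,
    fun y ↦ by fin_cases k <;> fin_cases y <;> norm_num [bobResponse]⟩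

theorem Pbox_eq_mixture (a b x y : Fin 2) :
    Pbox a b x y = 1 / 2 * mubOverlap a x 0 * bobResponse 0 b y
      + 1 / 2 * mubOverlap a x 1 * bobResponse 1 b y := by
  fin_cases a <;> fin_cases b <;> fin_cases x <;> fin_cases y <;>
    norm_num [Pbox, mubOverlap, bobResponse]

/-- the box `P` admits an LHS–LHV decomposition from Bob to Alice
with hidden variable of dimension 2 (so `P` is not superunsteerable from Bob to
Alice). -/
theorem stmt_3 :
    ∃ (Meas : Fin 2 → Fin 2 → Matrix (Fin 2) (Fin 2) ℂ)
      (σ0 σ1 : Matrix (Fin 2) (Fin 2) ℂ) (B0 B1 : Fin 2 → Fin 2 → ℝ),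
      IsMUBPair Meas ∧ IsQubitState σ0 ∧ IsQubitState σ1 ∧
      IsCondDistrib B0 ∧ IsCondDistrib B1 ∧
      ∀ a b x y : Fin 2, (Pbox a b x y : ℂ) =
        (1/2) * (Meas a x * σ0).trace * (B0 b y : ℂ)
        + (1/2) * (Meas a x * σ1).trace * (B1 b y : ℂ) := by
  obtain ⟨Meas, hMeas⟩ := exists_isMUBPair
  refine ⟨Meas, Meas 0 0, Meas 0 1, bobResponse 0, bobResponse 1, hMeas,
    (hMeas.1 0 0).isQubitState, (hMeas.1 0 1).isQubitState,
    isCondDistrib_bobResponse 0, isCondDistrib_bobResponse 1, fun a b x y ↦ ?_⟩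
  rw [hMeas.trace_mul_proj_zero, hMeas.trace_mul_proj_zero, Pbox_eq_mixture]
  push_cast
  ring
end
end

section
/- There do not exist strictly positive weights p(0), p(1), p(2), p(3) with Σ_λ p(λ) = 1 and conditional distributions Q_0, Q_1, Q_2, Q_3 for Bob satisfying Q_0 = Q_2 = Q_3, such that P(a,b|x,y) = p(0) · P_D^{00}(a|x) · Q_0(b|y) + p(1) · P_D^{01}(a|x) · Q_1(b|y) + p(2) · P_D^{10}(a|x) · Q_2(b|y) + p(3) · P_D^{11}(a|x) · Q_3(b|y) for all a,b,x,y ∈ {0,1}. -/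
open Matrix Kronecker ComplexOrder

noncomputable section

/-!
Evaluating the decomposition at `(a,b,x,y) = (1,0,0,0)` and `(1,1,1,0)`, where `P` vanishes,
leaves `0 = p₁ Q₁(0|0) + p₃ Q₃(0|0)` and `0 = p₁ Q₁(1|0) + p₂ Q₂(1|0)`. All terms are
nonnegative and `p₁ > 0`, so `Q₁(·|0)` vanishes on both outcomes and cannot sum to `1`.
-/

theorem eq_zero_of_mul_add_mul_eq_zero {α : Type*} [Semiring α] [PartialOrder α]
    [IsOrderedRing α] [NoZeroDivisors α] {p q u v : α} (hp : 0 < p) (hq : 0 ≤ q) (hu : 0 ≤ u)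
    (hv : 0 ≤ v) (h : p * u + q * v = 0) : u = 0 := by
  have hpu : p * u = 0 :=
    ((add_eq_zero_iff_of_nonneg (mul_nonneg hp.le hu) (mul_nonneg hq hv)).1 h).1
  exact (mul_eq_zero.1 hpu).resolve_left hp.ne'

theorem IsCondDistrib.not_forall_eq_zero {Q : Fin 2 → Fin 2 → ℝ} (hQ : IsCondDistrib Q)
    (y : Fin 2) : ¬ ∀ b, Q b y = 0 := fun h => by
  simpa [h] using hQ.2 y

/-- `P` has no dimension-4 deterministic-Alice LHV–LHS-type
decomposition with Bob's boxes satisfying `Q₀ = Q₂ = Q₃`. -/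
theorem stmt_11 :
    ¬ ∃ (p0 p1 p2 p3 : ℝ) (Q0 Q1 Q2 Q3 : Fin 2 → Fin 2 → ℝ),
      0 < p0 ∧ 0 < p1 ∧ 0 < p2 ∧ 0 < p3 ∧ p0 + p1 + p2 + p3 = 1 ∧
      IsCondDistrib Q0 ∧ IsCondDistrib Q1 ∧ IsCondDistrib Q2 ∧ IsCondDistrib Q3 ∧
      Q0 = Q2 ∧ Q2 = Q3 ∧
      ∀ a b x y : Fin 2, Pbox a b x y =
        p0 * PD 0 0 a x * Q0 b y + p1 * PD 0 1 a x * Q1 b y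
        + p2 * PD 1 0 a x * Q2 b y + p3 * PD 1 1 a x * Q3 b y := by
  rintro ⟨p0, p1, p2, p3, Q0, Q1, Q2, Q3, -, hp1, hp2, hp3, -, -, hQ1, hQ2, hQ3, -, -, hP⟩
  have h₁₀₀₀ : p1 * Q1 0 0 + p3 * Q3 0 0 = 0 := by
    simpa [Pbox, PD] using (hP 1 0 0 0).symm
  have h₁₁₁₀ : p1 * Q1 1 0 + p2 * Q2 1 0 = 0 := by
    simpa [Pbox, PD] using (hP 1 1 1 0).symm
  refine hQ1.not_forall_eq_zero 0 fun b => ?_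
  fin_cases b
  · exact eq_zero_of_mul_add_mul_eq_zero hp1 hp3.le (hQ1.1 0 0) (hQ3.1 0 0) h₁₀₀₀
  · exact eq_zero_of_mul_add_mul_eq_zero hp1 hp2.le (hQ1.1 1 0) (hQ2.1 1 0) h₁₁₁₀
end
end

section
/- There do not exist strictly positive weights p(0), p(1), p(2), p(3) with Σ_λ p(λ) = 1 and conditional distributions Q_0, Q_1, Q_2, Q_3 for Bob satisfying Q_0 = Q_3 and Q_1 = Q_2, such that P(a,b|x,y) = p(0) · P_D^{00}(a|x) · Q_0(b|y) + p(1) · P_D^{01}(a|x) · Q_1(b|y) + p(2) · P_D^{10}(a|x) · Q_2(b|y) + p(3) · P_D^{11}(a|x) · Q_3(b|y) for all a,b,x,y ∈ {0,1}. -/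
open Matrix Kronecker ComplexOrder

noncomputable section

/-
Alice's outcome `a = 1` with Bob's `b = 0` never occurs at inputs `(0, 0)`, and neither does
`a = b = 1` at inputs `(1, 0)`. The deterministic strategy `P_D^{01}` outputs `a = 1` on both
inputs, so positivity of `p(1)` forces `Q_1(0|0) = 0` and `Q_1(1|0) = 0`, contradicting the
normalisation of `Q_1(·|0)`.
-/

theorem eq_zero_of_mul_add_mul_eq_zero_s15 {R : Type*} [Semiring R] [LinearOrder R]
    [IsStrictOrderedRing R] {p q r s : R} (hp : 0 < p) (hq : 0 ≤ q) (hr : 0 ≤ r) (hs : 0 ≤ s)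
    (h : p * q + r * s = 0) : q = 0 :=
  le_antisymm (nonpos_of_mul_nonpos_right
    ((add_eq_zero_iff_of_nonneg (mul_nonneg hp.le hq) (mul_nonneg hr hs)).1 h).1.le hp) hq

/-- `P` has no dimension-4 deterministic-Alice LHV–LHS-type
decomposition with Bob's boxes satisfying `Q₀ = Q₃` and `Q₁ = Q₂`. -/
theorem stmt_15 :
    ¬ ∃ (p0 p1 p2 p3 : ℝ) (Q0 Q1 Q2 Q3 : Fin 2 → Fin 2 → ℝ),
      0 < p0 ∧ 0 < p1 ∧ 0 < p2 ∧ 0 < p3 ∧ p0 + p1 + p2 + p3 = 1 ∧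
      IsCondDistrib Q0 ∧ IsCondDistrib Q1 ∧ IsCondDistrib Q2 ∧ IsCondDistrib Q3 ∧
      Q0 = Q3 ∧ Q1 = Q2 ∧
      ∀ a b x y : Fin 2, Pbox a b x y =
        p0 * PD 0 0 a x * Q0 b y + p1 * PD 0 1 a x * Q1 b y
        + p2 * PD 1 0 a x * Q2 b y + p3 * PD 1 1 a x * Q3 b y := by
  rintro ⟨p0, p1, p2, p3, Q0, Q1, Q2, Q3, -, hp1, hp2, hp3, -, -, ⟨hQ1_nonneg, hQ1_sum⟩,
    ⟨hQ2_nonneg, -⟩, ⟨hQ3_nonneg, -⟩, -, -, hdec⟩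
  have h_a1_b0 : p1 * Q1 0 0 + p3 * Q3 0 0 = 0 := by
    simpa [Pbox, PD] using (hdec 1 0 0 0).symm
  have h_a1_b1 : p1 * Q1 1 0 + p2 * Q2 1 0 = 0 := by
    simpa [Pbox, PD] using (hdec 1 1 1 0).symm
  have hQ1_zero : Q1 0 0 + Q1 1 0 = 0 := by
    rw [eq_zero_of_mul_add_mul_eq_zero_s15 hp1 (hQ1_nonneg 0 0) hp3.le (hQ3_nonneg 0 0) h_a1_b0,
      eq_zero_of_mul_add_mul_eq_zero_s15 hp1 (hQ1_nonneg 1 0) hp2.le (hQ2_nonneg 1 0) h_a1_b1,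
      add_zero]
  linarith [hQ1_sum 0]
end
end
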